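/- arXiv:2005.08915 — 3 statements merged into one kernel-verified Lean document; each statement's English description precedes it below -/
import Mathlib

section
/- Fix m ∈ ℕ and real numbers x < y. Let g : ℕ → ℝ satisfy g(n) = o(log log n), and let k = k(n) := e log n + ((e−1)(m−1) − 1/2) log log n + g(n). Let N(n,x) := n log n + (m−1) n log log n + xn. Then as n → ∞, (n(y−x)/k!) · (1 − 1/n)^{N(n,x)−k} · (log n + (m−1) log log n + y)^k ∼ (y−x) e^{ey − x − g(n)} / √(2πe); in particular, if lim_{n→∞} g(n) = ∞ then this quantity tends to 0. -/
open MeasureTheory ProbabilityTheory Filter Real Topology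

noncomputable section

/-- The number of coupon types that appear exactly `k` times among the first `x` draws. -/
def couponCount {Ω : Type*} {n : ℕ} (X : ℕ → Ω → Fin n) (k x : ℕ) (ω : Ω) : ℕ :=
  (Finset.univ.filter fun c : Fin n =>
    ((Finset.range x).filter fun i => X i ω = c).card = k).card

/-- The number of coupons drawn until every type has appeared at least `m` times. -/
def collectTime {Ω : Type*} {n : ℕ} (X : ℕ → Ω → Fin n) (m : ℕ) (ω : Ω) : ℕ :=
  sInf {t | ∀ c : Fin n, m ≤ ((Finset.range t).filter fun i => X i ω = c).card}

/-- The draws `X i` are independent and each uniformly distributed on the `n` types. -/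
def IIDUniform {Ω : Type*} [MeasurableSpace Ω] {n : ℕ} (X : ℕ → Ω → Fin n)
    (μ : Measure Ω) : Prop :=
  (∀ i, Measurable (X i)) ∧ iIndepFun X μ ∧
    ∀ i (c : Fin n), μ {ω | X i ω = c} = 1 / n

/-- The Gumbel distribution `Gumbel(a, 1)`, i.e. the Borel measure on `ℝ` whose cumulative
distribution function is `x ↦ exp (-exp (-(x - a)))`. -/
def gumbelCDF (a : ℝ) : StieltjesFunction ℝ where
  toFun := fun x => Real.exp (-Real.exp (-(x - a)))
  mono' := fun x y h => by
    have h1 : Real.exp (-(y - a)) ≤ Real.exp (-(x - a)) := Real.exp_le_exp.2 (by linarith)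
    exact Real.exp_le_exp.2 (by linarith)
  right_continuous' := fun x => Continuous.continuousWithinAt (by continuity)

def gumbelMeasure (a : ℝ) : Measure ℝ := (gumbelCDF a).measure

/-- Auxiliary: second-order Taylor bound for `log (1+t)`. -/
lemma aux_log_taylor16 {t : ℝ} (ht : |t| ≤ 1/2) : |Real.log (1 + t) - t| ≤ 2 * t ^ 2 := by
  have h1 : |(-t)| < 1 := by rw [abs_neg]; linarith
  have h := Real.abs_log_sub_add_sum_range_le h1 1
  simp only [Finset.sum_range_one, pow_one, Nat.cast_zero, zero_add, Nat.cast_one, div_one,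
    sub_neg_eq_add, abs_neg] at h
  have h2 : |t| ^ (1+1) / (1 - |t|) ≤ 2 * t ^ 2 := by
    have e : |t| ^ (1+1) = t ^ 2 := by norm_num [sq_abs]
    rw [e, div_le_iff₀ (by linarith)]
    nlinarith [sq_nonneg t, abs_nonneg t]
  calc |Real.log (1 + t) - t| = |-t + Real.log (1 + t)| := by
        congr 1; ring
    _ ≤ |t| ^ (1+1) / (1 - |t|) := h
    _ ≤ 2 * t ^ 2 := h2

/-- Auxiliary: the remainder in Stirling's formula for `log j!`. -/
def stirRem16 (j : ℕ) : ℝ :=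
  Real.log j.factorial - ((j : ℝ) * Real.log j - j + (1/2) * Real.log (2 * π * j))

lemma stirRem16_tendsto : Tendsto stirRem16 atTop (𝓝 0) := by
  have h := Stirling.tendsto_stirlingSeq_sqrt_pi
  have hlog : Tendsto (fun j => Real.log (Stirling.stirlingSeq j)) atTop (𝓝 (Real.log (√π))) :=
    ((Real.continuousAt_log (by positivity)).tendsto).comp h
  have h2 : Tendsto (fun j => Real.log (Stirling.stirlingSeq j) - Real.log (√π)) atTop (𝓝 0) := by
    simpa using hlog.sub_const (Real.log (√π))
  refine h2.congr' ?_
  filter_upwards [eventually_ge_atTop 1] with j hj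
  have hj0 : (0:ℝ) < (j:ℝ) := by exact_mod_cast hj
  have hform := Stirling.log_stirlingSeq_formula j
  have hsq : Real.log (√π) = (1/2) * Real.log π := by
    rw [Real.log_sqrt pi_pos.le]; ring
  have hdiv : Real.log ((j:ℝ) / Real.exp 1) = Real.log j - 1 := by
    rw [Real.log_div hj0.ne' (Real.exp_ne_zero 1), Real.log_exp]
  have h2pij : Real.log (2 * π * j) = Real.log (2 * j) + Real.log π := by
    rw [show (2 * π * (j:ℝ)) = (2 * j) * π by ring,
      Real.log_mul (by positivity) pi_pos.ne']
  simp only [stirRem16]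
  rw [hform, hdiv, hsq, h2pij]
  ring

set_option maxHeartbeats 1600000 in
/-- Fix `m ≥ 1` and reals `x < y`. Let `g(n) = o(log log n)` and
`k(n) = e log n + ((e-1)(m-1) - 1/2) log log n + g(n) ∈ ℕ`, and set
`N(n,x) = n log n + (m-1) n log log n + x n`. Then
`(n (y-x)/k!) (1 - 1/n)^(N(n,x)-k) (log n + (m-1) log log n + y)^k
  ∼ (y-x) e^(ey - x - g(n))/√(2πe)` as `n → ∞`; in particular if `g(n) → ∞` this quantity
tends to `0`. -/
theorem statement16
    (m : ℕ) (hm : 1 ≤ m) (x y : ℝ) (hxy : x < y)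
    (g : ℕ → ℝ)
    (hg : g =o[atTop] fun n => Real.log (Real.log n))
    (k : ℕ → ℕ)
    (hk : ∀ n : ℕ, (k n : ℝ) =
      Real.exp 1 * Real.log n
        + ((Real.exp 1 - 1) * ((m : ℝ) - 1) - 1 / 2) * Real.log (Real.log n)
        + g n) :
    Tendsto
      (fun n : ℕ =>
        ((n : ℝ) * (y - x) / ((k n).factorial : ℝ)
            * (1 - 1 / (n : ℝ))
                ^ (((n : ℝ) * Real.log n + ((m : ℝ) - 1) * n * Real.log (Real.log n)
                    + x * n) - (k n : ℝ))
            * (Real.log n + ((m : ℝ) - 1) * Real.log (Real.log n) + y) ^ (k n))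
          / ((y - x) * Real.exp (Real.exp 1 * y - x - g n)
              / Real.sqrt (2 * π * Real.exp 1)))
      atTop (𝓝 1)
    ∧
    (Tendsto g atTop atTop →
      Tendsto
        (fun n : ℕ =>
          (n : ℝ) * (y - x) / ((k n).factorial : ℝ)
            * (1 - 1 / (n : ℝ))
                ^ (((n : ℝ) * Real.log n + ((m : ℝ) - 1) * n * Real.log (Real.log n)
                    + x * n) - (k n : ℝ))
            * (Real.log n + ((m : ℝ) - 1) * Real.log (Real.log n) + y) ^ (k n))
        atTop (𝓝 0)) := by
  have e1 : (0:ℝ) < Real.exp 1 := Real.exp_pos 1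
  have he1 : (1:ℝ) ≤ Real.exp 1 := by linarith [Real.exp_one_gt_d9]
  set c : ℝ := (Real.exp 1 - 1) * ((m:ℝ) - 1) - 1/2 with hc
  set D : ℕ → ℝ := fun n => c * Real.log (Real.log n) + g n with hD
  have hkD : ∀ n : ℕ, (k n : ℝ) = Real.exp 1 * Real.log n + D n := by
    intro n; rw [hk n]; simp only [hD]; ring
  have hLtop : Tendsto (fun n : ℕ => Real.log n) atTop atTop :=
    Real.tendsto_log_atTop.comp tendsto_natCast_atTop_atTop
  have hLLtop : Tendsto (fun n : ℕ => Real.log (Real.log n)) atTop atTop :=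
    Real.tendsto_log_atTop.comp hLtop
  have hLLdivL : Tendsto (fun n : ℕ => Real.log (Real.log n) / Real.log n) atTop (𝓝 0) :=
    (Real.isLittleO_log_id_atTop.tendsto_div_nhds_zero).comp hLtop
  have hLL2divL : Tendsto (fun n : ℕ => (Real.log (Real.log n))^2 / Real.log n) atTop (𝓝 0) :=
    ((Real.isLittleO_pow_log_id_atTop (n := 2)).tendsto_div_nhds_zero).comp hLtop
  have hLdivn : Tendsto (fun n : ℕ => Real.log n / n) atTop (𝓝 0) :=
    (Real.isLittleO_log_id_atTop.tendsto_div_nhds_zero).comp tendsto_natCast_atTop_atTop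
  have h1divL : Tendsto (fun n : ℕ => 1 / Real.log n) atTop (𝓝 0) := by
    refine (hLtop.inv_tendsto_atTop).congr (fun n => ?_)
    simp [one_div]
  have hgLL : Tendsto (fun n => g n / Real.log (Real.log n)) atTop (𝓝 0) :=
    hg.tendsto_div_nhds_zero
  have hevL1 : ∀ᶠ n : ℕ in atTop, 1 ≤ Real.log n := hLtop.eventually_ge_atTop 1
  have hevLL1 : ∀ᶠ n : ℕ in atTop, 1 ≤ Real.log (Real.log n) := hLLtop.eventually_ge_atTop 1
  have hDLL : Tendsto (fun n => D n / Real.log (Real.log n)) atTop (𝓝 c) := by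
    have h1 : Tendsto (fun n => c + g n / Real.log (Real.log n)) atTop (𝓝 c) := by
      simpa using tendsto_const_nhds.add hgLL
    refine h1.congr' ?_
    filter_upwards [hevLL1] with n h1n
    have hne : Real.log (Real.log n) ≠ 0 := by linarith
    field_simp [hD, hne]
    rfl
  have hDL : Tendsto (fun n => D n / Real.log n) atTop (𝓝 0) := by
    have h1 := hDLL.mul hLLdivL
    rw [mul_zero] at h1
    refine h1.congr' ?_
    filter_upwards [hevLL1] with n h1n
    have : Real.log (Real.log n) ≠ 0 := by linarith
    field_simp
  have hkL : Tendsto (fun n => (k n : ℝ) / Real.log n) atTop (𝓝 (Real.exp 1)) := by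
    have h1 : Tendsto (fun n => Real.exp 1 + D n / Real.log n) atTop (𝓝 (Real.exp 1)) := by
      simpa using tendsto_const_nhds.add hDL
    refine h1.congr' ?_
    filter_upwards [hevL1] with n h1n
    have : Real.log n ≠ 0 := by linarith
    rw [hkD n]; field_simp
  have hkn : Tendsto (fun n => (k n : ℝ) / n) atTop (𝓝 0) := by
    have h1 := hkL.mul hLdivn
    rw [mul_zero] at h1
    refine h1.congr' ?_
    filter_upwards [hevL1] with n h1n
    have : Real.log n ≠ 0 := by linarith
    field_simp
  have hD2L : Tendsto (fun n => D n ^ 2 / Real.log n) atTop (𝓝 0) := by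
    have h1 := (hDLL.mul hDLL).mul hLL2divL
    rw [mul_zero] at h1
    refine h1.congr' ?_
    filter_upwards [hevLL1, hevL1] with n h1n h2n
    have hne : Real.log (Real.log n) ≠ 0 := by linarith
    have hLne : Real.log n ≠ 0 := by linarith
    field_simp
  have hu : Tendsto (fun n : ℕ => (((m:ℝ)-1) * Real.log (Real.log n) + y) / Real.log n)
      atTop (𝓝 0) := by
    have h1 : Tendsto (fun n : ℕ => ((m:ℝ)-1) * (Real.log (Real.log n) / Real.log n)
        + y * (1 / Real.log n)) atTop (𝓝 0) := by
      simpa using (hLLdivL.const_mul ((m:ℝ)-1)).add (h1divL.const_mul y)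
    refine h1.congr (fun n => by ring)
  have hw : Tendsto (fun n : ℕ => D n / Real.exp 1 / Real.log n) atTop (𝓝 0) := by
    have h1 := hDL.div_const (Real.exp 1)
    rw [zero_div] at h1
    refine h1.congr (fun n => by ring)
  have hDu : Tendsto (fun n : ℕ => D n * ((((m:ℝ)-1) * Real.log (Real.log n) + y) / Real.log n))
      atTop (𝓝 0) := by
    have h2 : Tendsto (fun n : ℕ => ((m:ℝ)-1) * ((Real.log (Real.log n))^2 / Real.log n)
        + y * (Real.log (Real.log n) / Real.log n)) atTop (𝓝 0) := by
      simpa using (hLL2divL.const_mul ((m:ℝ)-1)).add (hLLdivL.const_mul y)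
    have h1 := hDLL.mul h2
    rw [mul_zero] at h1
    refine h1.congr' ?_
    filter_upwards [hevLL1, hevL1] with n h1n h2n
    have hne : Real.log (Real.log n) ≠ 0 := by linarith
    have hLne : Real.log n ≠ 0 := by linarith
    field_simp
  have hDw : Tendsto (fun n : ℕ => D n * (D n / Real.exp 1 / Real.log n)) atTop (𝓝 0) := by
    have h1 := hD2L.div_const (Real.exp 1)
    rw [zero_div] at h1
    refine h1.congr (fun n => by ring)
  have h1wlim : Tendsto (fun n : ℕ => Real.log (1 + D n / Real.exp 1 / Real.log n))
      atTop (𝓝 0) := by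
    have h1 : Tendsto (fun n : ℕ => 1 + D n / Real.exp 1 / Real.log n) atTop (𝓝 1) := by
      simpa using tendsto_const_nhds.add hw
    have := (Real.continuousAt_log one_ne_zero).tendsto.comp h1
    simpa [Function.comp_def] using this
  have hktop : Tendsto k atTop atTop := by
    rw [← tendsto_natCast_atTop_iff (R := ℝ)]
    have hev : ∀ᶠ n : ℕ in atTop, Real.log n ≤ (k n : ℝ) := by
      filter_upwards [hevL1, hkL.eventually (eventually_ge_nhds
        (by linarith [Real.exp_one_gt_d9] : (1:ℝ) < Real.exp 1))] with n h1n h2n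
      have hL0 : (0:ℝ) < Real.log n := by linarith
      calc Real.log n = 1 * Real.log n := (one_mul _).symm
        _ ≤ ((k n : ℝ) / Real.log n) * Real.log n := by
            apply mul_le_mul_of_nonneg_right h2n hL0.le
        _ = (k n : ℝ) := by field_simp
    exact tendsto_atTop_mono' atTop hev hLtop
  -- further eventual facts
  have hevLLx : ∀ᶠ n : ℕ in atTop, |x| + |y| + 1 ≤ Real.log (Real.log n) :=
    hLLtop.eventually_ge_atTop _
  have hevLLleL : ∀ᶠ n : ℕ in atTop, Real.log (Real.log n) ≤ Real.log n := by
    filter_upwards [hevL1] with n h1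
    exact Real.log_le_self (by linarith)
  have hevk3L : ∀ᶠ n : ℕ in atTop, (k n : ℝ) ≤ 3 * Real.log n := by
    filter_upwards [hevL1, hkL.eventually (eventually_le_nhds
      (by linarith [Real.exp_one_lt_d9] : Real.exp 1 < 3))] with n h1 h2
    have hL0 : (0:ℝ) < Real.log n := by linarith
    calc (k n : ℝ) = ((k n : ℝ)/Real.log n) * Real.log n := by field_simp
      _ ≤ 3 * Real.log n := mul_le_mul_of_nonneg_right h2 hL0.le
  have hevn3 : ∀ᶠ n : ℕ in atTop, 3 ≤ n := eventually_ge_atTop 3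
  have hevu2 : ∀ᶠ n : ℕ in atTop,
      |(((m:ℝ)-1) * Real.log (Real.log n) + y) / Real.log n| ≤ 1/2 := by
    filter_upwards [NormedAddCommGroup.tendsto_nhds_zero.mp hu (1/2) (by norm_num)] with n hn
    rw [Real.norm_eq_abs] at hn; exact hn.le
  have hevw2 : ∀ᶠ n : ℕ in atTop, |D n / Real.exp 1 / Real.log n| ≤ 1/2 := by
    filter_upwards [NormedAddCommGroup.tendsto_nhds_zero.mp hw (1/2) (by norm_num)] with n hn
    rw [Real.norm_eq_abs] at hn; exact hn.le
  have hm1 : (1:ℝ) ≤ (m:ℝ) := by exact_mod_cast hm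
  -- squeeze bounds
  have hG1 : Tendsto (fun n : ℕ =>
      ((n:ℝ) * Real.log n + ((m:ℝ)-1) * n * Real.log (Real.log n) + x * n - k n)
        * (Real.log (1 - 1/(n:ℝ)) + 1/(n:ℝ))) atTop (𝓝 0) := by
    apply squeeze_zero_norm' (a := fun n : ℕ => 2 * ((m:ℝ)+2) * (Real.log n / n))
    · filter_upwards [hevn3, hevL1, hevLL1, hevLLx, hevLLleL, hevk3L] with n h3 hL1 hLL1
        hLLx hLLleL hk3
      have h3' : (3:ℝ) ≤ (n:ℝ) := by exact_mod_cast h3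
      have hn0 : (0:ℝ) < n := by linarith
      have hxle : |x| ≤ Real.log (Real.log n) := by
        have := abs_nonneg y; linarith
      have ht : |Real.log (1 - 1/(n:ℝ)) + 1/(n:ℝ)| ≤ 2 * (1/(n:ℝ))^2 := by
        have h12 : |(-(1/(n:ℝ)))| ≤ 1/2 := by
          rw [abs_neg, abs_of_nonneg (by positivity)]
          rw [div_le_div_iff₀ hn0 (by norm_num : (0:ℝ) < 2)]
          linarith
        have h := aux_log_taylor16 h12
        rw [show (1:ℝ) + -(1/(n:ℝ)) = 1 - 1/(n:ℝ) by ring, sub_neg_eq_add, neg_sq] at h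
        exact h
      have hE : |(n:ℝ) * Real.log n + ((m:ℝ)-1) * n * Real.log (Real.log n) + x * n - k n|
          ≤ ((m:ℝ)+2) * n * Real.log n := by
        have hk0 : (0:ℝ) ≤ (k n : ℝ) := Nat.cast_nonneg _
        have hkn2 : (k n : ℝ) ≤ (n:ℝ) * Real.log n := by nlinarith
        rw [abs_le]
        constructor
        · nlinarith [le_abs_self x, neg_abs_le x, mul_nonneg hn0.le (sub_nonneg.2 hxle),
            mul_nonneg (mul_nonneg (sub_nonneg.2 hm1) hn0.le) (sub_nonneg.2 hLLleL),
            mul_nonneg hn0.le (sub_nonneg.2 hLLleL)]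
        · nlinarith [le_abs_self x, neg_abs_le x, mul_nonneg hn0.le (sub_nonneg.2 hxle),
            mul_nonneg (mul_nonneg (sub_nonneg.2 hm1) hn0.le) (sub_nonneg.2 hLLleL),
            mul_nonneg hn0.le (sub_nonneg.2 hLLleL)]
      calc ‖((n:ℝ) * Real.log n + ((m:ℝ)-1) * n * Real.log (Real.log n) + x * n - k n)
            * (Real.log (1 - 1/(n:ℝ)) + 1/(n:ℝ))‖
          = |(n:ℝ) * Real.log n + ((m:ℝ)-1) * n * Real.log (Real.log n) + x * n - k n|
            * |Real.log (1 - 1/(n:ℝ)) + 1/(n:ℝ)| := by rw [Real.norm_eq_abs, abs_mul]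
        _ ≤ (((m:ℝ)+2) * n * Real.log n) * (2 * (1/(n:ℝ))^2) :=
            mul_le_mul hE ht (abs_nonneg _) (by positivity)
        _ = 2 * ((m:ℝ)+2) * (Real.log n / n) := by field_simp
    · simpa using hLdivn.const_mul (2 * ((m:ℝ)+2))
  have hG2 : Tendsto (fun n : ℕ => (k n : ℝ) *
      (Real.log (1 + (((m:ℝ)-1) * Real.log (Real.log n) + y) / Real.log n)
        - (((m:ℝ)-1) * Real.log (Real.log n) + y) / Real.log n)) atTop (𝓝 0) := by
    apply squeeze_zero_norm'
      (a := fun n : ℕ => 6 * (m:ℝ)^2 * ((Real.log (Real.log n))^2 / Real.log n))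
    · filter_upwards [hevL1, hevLL1, hevLLx, hevu2, hevk3L] with n hL1 hLL1 hLLx hu2 hk3
      have hL0 : (0:ℝ) < Real.log n := by linarith
      have h := aux_log_taylor16 hu2
      have hyle : |y| ≤ Real.log (Real.log n) := by have := abs_nonneg x; linarith
      have hnum : |((m:ℝ)-1) * Real.log (Real.log n) + y| ≤ (m:ℝ) * Real.log (Real.log n) := by
        have h1 : |((m:ℝ)-1) * Real.log (Real.log n) + y|
            ≤ |((m:ℝ)-1) * Real.log (Real.log n)| + |y| := abs_add_le _ _
        rw [abs_of_nonneg (mul_nonneg (by linarith : (0:ℝ) ≤ (m:ℝ)-1)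
          (by linarith : (0:ℝ) ≤ Real.log (Real.log n)))] at h1
        linarith
      have huabs : |(((m:ℝ)-1) * Real.log (Real.log n) + y) / Real.log n|
          ≤ (m:ℝ) * Real.log (Real.log n) / Real.log n := by
        rw [abs_div, abs_of_pos hL0]
        gcongr
      have hsq : ((((m:ℝ)-1) * Real.log (Real.log n) + y) / Real.log n)^2
          ≤ ((m:ℝ) * Real.log (Real.log n) / Real.log n)^2 := by
        rw [← sq_abs]
        exact pow_le_pow_left₀ (abs_nonneg _) huabs 2
      calc ‖(k n : ℝ) * (Real.log (1 + (((m:ℝ)-1) * Real.log (Real.log n) + y) / Real.log n)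
            - (((m:ℝ)-1) * Real.log (Real.log n) + y) / Real.log n)‖
          = (k n : ℝ) * |Real.log (1 + (((m:ℝ)-1) * Real.log (Real.log n) + y) / Real.log n)
            - (((m:ℝ)-1) * Real.log (Real.log n) + y) / Real.log n| := by
            rw [Real.norm_eq_abs, abs_mul, abs_of_nonneg (Nat.cast_nonneg _)]
        _ ≤ (3 * Real.log n) * (2 * ((m:ℝ) * Real.log (Real.log n) / Real.log n)^2) := by
            apply mul_le_mul hk3 (h.trans (by nlinarith)) (abs_nonneg _) (by positivity)
        _ = 6 * (m:ℝ)^2 * ((Real.log (Real.log n))^2 / Real.log n) := by field_simp; ring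
    · simpa using hLL2divL.const_mul (6 * (m:ℝ)^2)
  have hG3 : Tendsto (fun n : ℕ => (k n : ℝ) *
      (Real.log (1 + D n / Real.exp 1 / Real.log n) - D n / Real.exp 1 / Real.log n))
      atTop (𝓝 0) := by
    apply squeeze_zero_norm' (a := fun n : ℕ => 6 * (D n ^ 2 / Real.log n))
    · filter_upwards [hevL1, hevw2, hevk3L] with n hL1 hw2 hk3
      have hL0 : (0:ℝ) < Real.log n := by linarith
      have h := aux_log_taylor16 hw2
      have hwabs : |D n / Real.exp 1 / Real.log n| ≤ |D n| / Real.log n := by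
        rw [abs_div, abs_div, abs_of_pos hL0, abs_of_pos e1]
        gcongr
        exact div_le_self (abs_nonneg _) he1
      have hsq : (D n / Real.exp 1 / Real.log n)^2 ≤ (|D n| / Real.log n)^2 := by
        rw [← sq_abs]
        exact pow_le_pow_left₀ (abs_nonneg _) hwabs 2
      calc ‖(k n : ℝ) * (Real.log (1 + D n / Real.exp 1 / Real.log n)
            - D n / Real.exp 1 / Real.log n)‖
          = (k n : ℝ) * |Real.log (1 + D n / Real.exp 1 / Real.log n)
            - D n / Real.exp 1 / Real.log n| := by
            rw [Real.norm_eq_abs, abs_mul, abs_of_nonneg (Nat.cast_nonneg _)]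
        _ ≤ (3 * Real.log n) * (2 * (|D n| / Real.log n)^2) := by
            apply mul_le_mul hk3 (h.trans (by nlinarith)) (abs_nonneg _) (by positivity)
        _ = 6 * (D n ^ 2 / Real.log n) := by
            rw [div_pow, sq_abs]
            field_simp
            ring
    · simpa using hD2L.const_mul 6
  have hstir : Tendsto (fun n : ℕ => stirRem16 (k n)) atTop (𝓝 0) :=
    stirRem16_tendsto.comp hktop
  have hGsum : Tendsto (fun n : ℕ =>
      ((n:ℝ) * Real.log n + ((m:ℝ)-1) * n * Real.log (Real.log n) + x * n - k n)
        * (Real.log (1 - 1/(n:ℝ)) + 1/(n:ℝ))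
      + (k n : ℝ) * (Real.log (1 + (((m:ℝ)-1) * Real.log (Real.log n) + y) / Real.log n)
          - (((m:ℝ)-1) * Real.log (Real.log n) + y) / Real.log n)
      - (k n : ℝ) * (Real.log (1 + D n / Real.exp 1 / Real.log n)
          - D n / Real.exp 1 / Real.log n)
      + D n * ((((m:ℝ)-1) * Real.log (Real.log n) + y) / Real.log n)
      - D n * (D n / Real.exp 1 / Real.log n)
      - (1/2) * Real.log (1 + D n / Real.exp 1 / Real.log n)
      - stirRem16 (k n) + (k n : ℝ)/n) atTop (𝓝 0) := by
    have := ((((((hG1.add hG2).sub hG3).add hDu).sub hDw).sub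
      (h1wlim.const_mul ((1:ℝ)/2))).sub hstir).add hkn
    simpa using this
  have hF : Tendsto (fun n : ℕ =>
      Real.log n - Real.log ((k n).factorial : ℝ)
        + ((n:ℝ) * Real.log n + ((m:ℝ)-1) * n * Real.log (Real.log n) + x * n - k n)
            * Real.log (1 - 1/(n:ℝ))
        + (k n : ℝ) * Real.log (Real.log n + ((m:ℝ)-1) * Real.log (Real.log n) + y)
        + (x - Real.exp 1 * y + g n) + (1/2) * Real.log (2*π*Real.exp 1))
      atTop (𝓝 0) := by
    refine hGsum.congr' ?_
    filter_upwards [hevn3, hevL1, hevLL1, hevu2, hevw2] with n h3 hL1 hLL1 hu2 hw2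
    have h3' : (3:ℝ) ≤ n := by exact_mod_cast h3
    have hn0 : (n:ℝ) ≠ 0 := by linarith
    have hL0 : (0:ℝ) < Real.log n := by linarith
    have hLne : Real.log n ≠ 0 := hL0.ne'
    have h1u : (0:ℝ) < 1 + (((m:ℝ)-1) * Real.log (Real.log n) + y) / Real.log n := by
      rcases abs_le.1 hu2 with ⟨h1, h2⟩; linarith
    have h1w : (0:ℝ) < 1 + D n / Real.exp 1 / Real.log n := by
      rcases abs_le.1 hw2 with ⟨h1, h2⟩; linarith
    have hBe : Real.log n + ((m:ℝ)-1) * Real.log (Real.log n) + y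
        = Real.log n * (1 + (((m:ℝ)-1) * Real.log (Real.log n) + y) / Real.log n) := by
      field_simp
      ring
    have hke : (k n : ℝ) = Real.exp 1 * Real.log n * (1 + D n / Real.exp 1 / Real.log n) := by
      rw [hkD n]; field_simp
    have hfact : Real.log ((k n).factorial : ℝ)
        = (k n : ℝ) * Real.log (k n) - (k n : ℝ)
          + (1/2) * Real.log (2*π*(k n)) + stirRem16 (k n) := by
      rw [stirRem16]; ring
    have h2pine : (2*π : ℝ) ≠ 0 := by positivity
    rw [hfact, hBe, Real.log_mul hLne h1u.ne', hke,
      Real.log_mul h2pine (mul_ne_zero (mul_ne_zero (Real.exp_ne_zero 1) hLne) h1w.ne'),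
      Real.log_mul (mul_ne_zero (Real.exp_ne_zero 1) hLne) h1w.ne',
      Real.log_mul (Real.exp_ne_zero 1) hLne, Real.log_exp,
      Real.log_mul h2pine (Real.exp_ne_zero 1), Real.log_exp]
    field_simp
    ring
  -- assemble
  have hsqrt : (0:ℝ) < Real.sqrt (2*π*Real.exp 1) := Real.sqrt_pos.2 (by positivity)
  have hyx : (0:ℝ) < y - x := by linarith
  have htargetpos : ∀ n : ℕ, (0:ℝ) < (y - x) * Real.exp (Real.exp 1 * y - x - g n)
      / Real.sqrt (2*π*Real.exp 1) := fun n =>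
    div_pos (mul_pos hyx (Real.exp_pos _)) hsqrt
  have hpart1 : Tendsto
      (fun n : ℕ =>
        ((n : ℝ) * (y - x) / ((k n).factorial : ℝ)
            * (1 - 1 / (n : ℝ))
                ^ (((n : ℝ) * Real.log n + ((m : ℝ) - 1) * n * Real.log (Real.log n)
                    + x * n) - (k n : ℝ))
            * (Real.log n + ((m : ℝ) - 1) * Real.log (Real.log n) + y) ^ (k n))
          / ((y - x) * Real.exp (Real.exp 1 * y - x - g n)
              / Real.sqrt (2 * π * Real.exp 1)))
      atTop (𝓝 1) := by
    have hexp : Tendsto (fun n : ℕ => Real.exp (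
      Real.log n - Real.log ((k n).factorial : ℝ)
        + ((n:ℝ) * Real.log n + ((m:ℝ)-1) * n * Real.log (Real.log n) + x * n - k n)
            * Real.log (1 - 1/(n:ℝ))
        + (k n : ℝ) * Real.log (Real.log n + ((m:ℝ)-1) * Real.log (Real.log n) + y)
        + (x - Real.exp 1 * y + g n) + (1/2) * Real.log (2*π*Real.exp 1)))
        atTop (𝓝 1) := by
      have := (Real.continuous_exp.tendsto 0).comp hF
      simpa [Function.comp_def] using this
    refine hexp.congr' ?_
    filter_upwards [hevn3, hevL1, hevLL1, hevu2] with n h3 hL1 hLL1 hu2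
    have h3' : (3:ℝ) ≤ n := by exact_mod_cast h3
    have hnpos : (0:ℝ) < n := by linarith
    have hL0 : (0:ℝ) < Real.log n := by linarith
    have hLne : Real.log n ≠ 0 := hL0.ne'
    have h1u : (0:ℝ) < 1 + (((m:ℝ)-1) * Real.log (Real.log n) + y) / Real.log n := by
      rcases abs_le.1 hu2 with ⟨h1, h2⟩; linarith
    have hB : (0:ℝ) < Real.log n + ((m:ℝ)-1) * Real.log (Real.log n) + y := by
      have hBe : Real.log n + ((m:ℝ)-1) * Real.log (Real.log n) + y
          = Real.log n * (1 + (((m:ℝ)-1) * Real.log (Real.log n) + y) / Real.log n) := by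
        field_simp
        ring
      rw [hBe]; exact mul_pos hL0 h1u
    have hbase : (0:ℝ) < 1 - 1/(n:ℝ) := by
      have : 1/(n:ℝ) ≤ 1/3 := by
        rw [div_le_div_iff₀ hnpos (by norm_num : (0:ℝ) < 3)]; linarith
      linarith
    have hfacpos : (0:ℝ) < ((k n).factorial : ℝ) := by
      exact_mod_cast Nat.factorial_pos (k n)
    have hexprpos : (0:ℝ) < (n : ℝ) * (y - x) / ((k n).factorial : ℝ)
        * (1 - 1 / (n : ℝ))
            ^ (((n : ℝ) * Real.log n + ((m : ℝ) - 1) * n * Real.log (Real.log n)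
                + x * n) - (k n : ℝ))
        * (Real.log n + ((m : ℝ) - 1) * Real.log (Real.log n) + y) ^ (k n) :=
      mul_pos (mul_pos (div_pos (mul_pos hnpos hyx) hfacpos)
        (Real.rpow_pos_of_pos hbase _)) (pow_pos hB _)
    rw [← Real.exp_log (div_pos hexprpos (htargetpos n)),
      Real.log_div hexprpos.ne' (htargetpos n).ne',
      Real.log_mul (mul_ne_zero (div_pos (mul_pos hnpos hyx) hfacpos).ne'
        (Real.rpow_pos_of_pos hbase _).ne') (pow_pos hB _).ne',
      Real.log_mul (div_pos (mul_pos hnpos hyx) hfacpos).ne'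
        (Real.rpow_pos_of_pos hbase _).ne',
      Real.log_pow, Real.log_rpow hbase,
      Real.log_div (mul_pos hnpos hyx).ne' hfacpos.ne',
      Real.log_mul hnpos.ne' hyx.ne',
      Real.log_div (mul_pos hyx (Real.exp_pos _)).ne' hsqrt.ne',
      Real.log_mul hyx.ne' (Real.exp_ne_zero _), Real.log_exp,
      Real.log_sqrt (by positivity : (0:ℝ) ≤ 2*π*Real.exp 1)]
    congr 1
    ring
  refine ⟨hpart1, fun hgtop => ?_⟩
  have htarget0 : Tendsto (fun n : ℕ => (y-x) * Real.exp (Real.exp 1 * y - x - g n)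
      / Real.sqrt (2*π*Real.exp 1)) atTop (𝓝 0) := by
    have h1 : Tendsto (fun n : ℕ => Real.exp 1 * y - x - g n) atTop atBot := by
      have h2 : Tendsto (fun n : ℕ => -g n) atTop atBot := tendsto_neg_atTop_atBot.comp hgtop
      have h3 := tendsto_atBot_add_const_left atTop (Real.exp 1 * y - x) h2
      refine h3.congr (fun n => by ring)
    have h2 : Tendsto (fun n : ℕ => Real.exp (Real.exp 1 * y - x - g n)) atTop (𝓝 0) :=
      Real.tendsto_exp_atBot.comp h1
    have := (h2.const_mul (y-x)).div_const (Real.sqrt (2*π*Real.exp 1))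
    simpa using this
  have hmul := hpart1.mul htarget0
  rw [one_mul] at hmul
  refine hmul.congr (fun n => ?_)
  exact div_mul_cancel₀ _ (htargetpos n).ne'
end
end

section
/- Suppose M coupons are drawn independently and uniformly at random from n distinct types, and let S_{k,M} be the number of types appearing exactly k times among the M coupons. Then for any integer 0 ≤ 2k ≤ M with k < n, Var(S_{k,M}) ≤ E(S_{k,M})^2 · ((1 − 1/n)^{−2k} − 1) + E(S_{k,M}). -/
open MeasureTheory ProbabilityTheory Filter Real Topology

noncomputable section

/-!
Write `S = ∑ c, 1_{A c}`, where `A c` is the event that type `c` is drawn exactly `k` times, so that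
`Var S ≤ E S + n (n - 1) W - (E S)²` whenever `W` bounds `P(A c ∩ A c')` for `c ≠ c'`.
Splitting `A c ∩ A c'` according to the sets of positions `s`, `t` at which `c` and `c'` occur,
independence gives `P ≤ n^(-2k) (1 - 2/n)^(M - 2k)` for each of the `(M choose k)²` pieces, and
`1 - 2/n ≤ (1 - 1/n)²` turns this into `P(A c ∩ A c') ≤ (1 - 1/n)^(-2k) P(A c)²`, since
`P(A c) = (M choose k) n^(-k) (1 - 1/n)^(M - k)`.
-/

open Finset

section Occurrences

variable {Ω : Type*} {n : ℕ}

def occurrences (X : ℕ → Ω → Fin n) (M : ℕ) (c : Fin n) (ω : Ω) : Finset ℕ :=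
  (range M).filter fun i => X i ω = c

variable {X : ℕ → Ω → Fin n} {M : ℕ}

lemma occurrences_eq_iff {c : Fin n} {s : Finset ℕ} {ω : Ω} (hs : s ⊆ range M) :
    occurrences X M c ω = s ↔ ∀ i ∈ range M, (X i ω = c ↔ i ∈ s) := by
  constructor
  · rintro rfl i hi
    simp [occurrences, mem_range.1 hi]
  · intro h
    ext i
    simp only [occurrences, mem_filter]
    exact ⟨fun ⟨hi, hc⟩ => (h i hi).1 hc, fun hi => ⟨hs hi, (h i (hs hi)).2 hi⟩⟩

lemma setOf_occurrences_eq {c : Fin n} {s : Finset ℕ} (hs : s ⊆ range M) :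
    {ω | occurrences X M c ω = s} =
      ⋂ i ∈ range M, X i ⁻¹' ({d | d = c ↔ i ∈ s} : Finset (Fin n)) := by
  ext ω
  simp [occurrences_eq_iff hs]

lemma setOf_card_occurrences_eq {k : ℕ} {c : Fin n} :
    {ω | #(occurrences X M c ω) = k} =
      ⋃ s ∈ powersetCard k (range M), {ω | occurrences X M c ω = s} := by
  ext ω
  simp only [Set.mem_ofPred_eq, Set.mem_iUnion, mem_powersetCard, exists_prop]
  exact ⟨fun h => ⟨_, ⟨filter_subset _ _, h⟩, rfl⟩, fun ⟨s, ⟨_, hs⟩, h⟩ => h ▸ hs⟩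

end Occurrences

lemma prod_range_ite_mem {R : Type*} [CommMonoid R] {M : ℕ} {s : Finset ℕ}
    (hs : s ⊆ range M) (a b : R) :
    ∏ i ∈ range M, (if i ∈ s then a else b) = a ^ #s * b ^ (M - #s) := by
  rw [prod_ite, prod_const, prod_const, filter_mem_eq_inter, inter_eq_right.2 hs,
    filter_not, filter_mem_eq_inter, inter_eq_right.2 hs, card_sdiff_of_subset hs, card_range]

lemma one_sub_two_mul_pow_le {x : ℝ} (hx : 2 * x ≤ 1) {k M : ℕ} (hk : 2 * k ≤ M) :
    (1 - 2 * x) ^ (M - 2 * k) ≤ (1 - x) ^ (-(2 * k : ℤ)) * ((1 - x) ^ (M - k)) ^ 2 := by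
  have hx1 : 1 - x ≠ 0 := by linarith
  have hexp : (M - k) * 2 = 2 * k + (M - 2 * k) * 2 := by omega
  have hzpow : (1 - x) ^ (-(2 * k : ℤ)) = ((1 - x) ^ (2 * k))⁻¹ := by
    rw [zpow_neg]; norm_cast
  rw [hzpow, ← pow_mul, hexp, pow_add, inv_mul_cancel_left₀ (pow_ne_zero _ hx1), pow_mul']
  exact pow_le_pow_left₀ (by linarith) (by nlinarith [sq_nonneg x]) _

namespace IIDUniform

variable {Ω : Type*} [MeasurableSpace Ω] {n : ℕ} {μ : Measure Ω} {X : ℕ → Ω → Fin n} {M : ℕ}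

lemma measureReal_preimage (hX : IIDUniform X μ) (i : ℕ) (B : Finset (Fin n)) :
    μ.real (X i ⁻¹' B) = #B / n := by
  have hB : X i ⁻¹' B = ⋃ c ∈ B, {ω | X i ω = c} := by ext; simp
  have hdisj : (B : Set (Fin n)).PairwiseDisjoint fun c => {ω | X i ω = c} :=
    fun c _ c' _ hcc => Set.disjoint_left.2 fun ω h h' => hcc (h.symm.trans h')
  rw [hB, measureReal_biUnion_finset hdisj (fun c _ => hX.1 i (measurableSet_singleton c))
    fun c _ => by simpa [hX.2.2] using c.pos.ne']
  simp [measureReal_def, hX.2.2, div_eq_mul_inv]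

lemma measurableSet_iInter_preimage (hX : IIDUniform X μ) (S : Finset ℕ)
    (B : ℕ → Finset (Fin n)) : MeasurableSet (⋂ i ∈ S, X i ⁻¹' B i) :=
  Finset.measurableSet_biInter S fun i _ => hX.1 i (B i).measurableSet

lemma measureReal_iInter_preimage (hX : IIDUniform X μ) (S : Finset ℕ)
    (B : ℕ → Finset (Fin n)) :
    μ.real (⋂ i ∈ S, X i ⁻¹' B i) = ∏ i ∈ S, (#(B i) / n : ℝ) := by
  rw [measureReal_def, hX.2.1.measure_inter_preimage_eq_mul S fun i _ => (B i).measurableSet,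
    ENNReal.toReal_prod]
  exact prod_congr rfl fun i _ => hX.measureReal_preimage i (B i)

lemma measureReal_occurrences_eq (hX : IIDUniform X μ) (c : Fin n) {s : Finset ℕ}
    (hs : s ⊆ range M) :
    μ.real {ω | occurrences X M c ω = s} = (n : ℝ)⁻¹ ^ #s * (1 - (n : ℝ)⁻¹) ^ (M - #s) := by
  have hn : (n : ℝ) ≠ 0 := by exact_mod_cast c.pos.ne'
  rw [setOf_occurrences_eq hs, hX.measureReal_iInter_preimage, ← prod_range_ite_mem hs]
  refine prod_congr rfl fun i _ => ?_
  by_cases hi : i ∈ s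
  · simp [hi, filter_eq']
  · simp [hi, filter_ne', card_erase_of_mem, Nat.cast_sub c.pos]
    field_simp

lemma measureReal_occurrences_eq_inter_le (hX : IIDUniform X μ) {c c' : Fin n} (hcc : c ≠ c')
    {s t : Finset ℕ} (hs : s ⊆ range M) (ht : t ⊆ range M) :
    μ.real ({ω | occurrences X M c ω = s} ∩ {ω | occurrences X M c' ω = t}) ≤
      (n : ℝ)⁻¹ ^ (#s + #t) * (1 - 2 / n) ^ (M - (#s + #t)) := by
  have hn : 2 ≤ n := (by simpa using Fintype.one_lt_card_iff.2 ⟨c, c', hcc⟩ : 1 < n)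
  have hset : {ω | occurrences X M c ω = s} ∩ {ω | occurrences X M c' ω = t} =
      ⋂ i ∈ range M, X i ⁻¹' ({d | (d = c ↔ i ∈ s) ∧ (d = c' ↔ i ∈ t)} : Finset (Fin n)) := by
    ext ω
    simp [occurrences_eq_iff hs, occurrences_eq_iff ht, forall_and]
  rw [hset, hX.measureReal_iInter_preimage]
  by_cases hst : Disjoint s t
  · rw [← card_union_of_disjoint hst, ← prod_range_ite_mem (union_subset hs ht)]
    refine le_of_eq (prod_congr rfl fun i _ => ?_)
    by_cases his : i ∈ s
    · have hit : i ∉ t := disjoint_left.1 hst his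
      have hB : ({d | (d = c ↔ i ∈ s) ∧ (d = c' ↔ i ∈ t)} : Finset (Fin n)) = {c} := by
        ext d; simp only [his, hit, mem_filter, mem_univ, mem_singleton]; grind
      rw [hB]; simp [his]
    by_cases hit : i ∈ t
    · have hB : ({d | (d = c ↔ i ∈ s) ∧ (d = c' ↔ i ∈ t)} : Finset (Fin n)) = {c'} := by
        ext d; simp only [his, hit, mem_filter, mem_univ, mem_singleton]; grind
      rw [hB]; simp [hit]
    · have hB : ({d | (d = c ↔ i ∈ s) ∧ (d = c' ↔ i ∈ t)} : Finset (Fin n)) = {c, c'}ᶜ := by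
        ext d; simp [his, hit]
      rw [hB, card_compl, card_pair hcc, Fintype.card_fin, Nat.cast_sub hn, Nat.cast_ofNat,
        if_neg (by simp [his, hit])]
      field_simp
  · obtain ⟨i, his, hit⟩ := not_disjoint_iff.1 hst
    -- no type is allowed at a position of `s ∩ t`
    rw [prod_eq_zero (hs his) (by simp [his, hit, hcc])]
    have hn' : (2 : ℝ) ≤ n := by exact_mod_cast hn
    have : 0 ≤ 1 - 2 / (n : ℝ) := by rw [sub_nonneg, div_le_one (by linarith)]; exact hn'
    positivity

lemma measurableSet_card_occurrences_eq (hX : IIDUniform X μ) (c : Fin n) (k : ℕ) :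
    MeasurableSet {ω | #(occurrences X M c ω) = k} := by
  rw [setOf_card_occurrences_eq]
  refine Finset.measurableSet_biUnion _ fun s hs => ?_
  rw [setOf_occurrences_eq (mem_powersetCard.1 hs).1]
  exact hX.measurableSet_iInter_preimage _ _

lemma measureReal_card_occurrences_eq [IsFiniteMeasure μ] (hX : IIDUniform X μ) (c : Fin n)
    (k : ℕ) :
    μ.real {ω | #(occurrences X M c ω) = k} =
      M.choose k * ((n : ℝ)⁻¹ ^ k * (1 - (n : ℝ)⁻¹) ^ (M - k)) := by
  have hdisj : ((powersetCard k (range M) : Finset (Finset ℕ)) : Set (Finset ℕ)).PairwiseDisjoint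
      fun s => {ω | occurrences X M c ω = s} :=
    fun s _ t _ hst => Set.disjoint_left.2 fun ω hs ht => hst (hs.symm.trans ht)
  rw [setOf_card_occurrences_eq, measureReal_biUnion_finset hdisj fun s hs => by
    rw [setOf_occurrences_eq (mem_powersetCard.1 hs).1]
    exact hX.measurableSet_iInter_preimage _ _]
  have hterm : ∀ s ∈ powersetCard k (range M),
      μ.real {ω | occurrences X M c ω = s} = (n : ℝ)⁻¹ ^ k * (1 - (n : ℝ)⁻¹) ^ (M - k) := by
    intro s hs
    obtain ⟨hsub, rfl⟩ := mem_powersetCard.1 hs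
    exact hX.measureReal_occurrences_eq c hsub
  rw [sum_congr rfl hterm, sum_const, card_powersetCard, card_range, nsmul_eq_mul]

lemma measureReal_card_occurrences_inter_le (hX : IIDUniform X μ)
    {c c' : Fin n} (hcc : c ≠ c') (k : ℕ) :
    μ.real ({ω | #(occurrences X M c ω) = k} ∩ {ω | #(occurrences X M c' ω) = k}) ≤
      M.choose k ^ 2 * ((n : ℝ)⁻¹ ^ (2 * k) * (1 - 2 / n) ^ (M - 2 * k)) := by
  rw [setOf_card_occurrences_eq, setOf_card_occurrences_eq, Set.iUnion₂_inter]
  simp_rw [Set.inter_iUnion₂]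
  calc _ ≤ ∑ s ∈ powersetCard k (range M), ∑ t ∈ powersetCard k (range M),
          μ.real ({ω | occurrences X M c ω = s} ∩ {ω | occurrences X M c' ω = t}) :=
        (measureReal_biUnion_finset_le _ _).trans
          (sum_le_sum fun s _ => measureReal_biUnion_finset_le _ _)
    _ ≤ ∑ s ∈ powersetCard k (range M), ∑ t ∈ powersetCard k (range M),
          (n : ℝ)⁻¹ ^ (2 * k) * (1 - 2 / n) ^ (M - 2 * k) := by
        refine sum_le_sum fun s hs => sum_le_sum fun t ht => ?_
        obtain ⟨hsub, rfl⟩ := mem_powersetCard.1 hs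
        obtain ⟨htsub, htk⟩ := mem_powersetCard.1 ht
        have h := hX.measureReal_occurrences_eq_inter_le hcc hsub htsub
        rwa [htk, ← two_mul] at h
    _ = _ := by simp only [sum_const, card_powersetCard, card_range, nsmul_eq_mul]; ring

lemma measureReal_card_occurrences_inter_le_sq [IsFiniteMeasure μ] (hX : IIDUniform X μ)
    {c c' : Fin n} (hcc : c ≠ c') {k : ℕ} (hk : 2 * k ≤ M) :
    μ.real ({ω | #(occurrences X M c ω) = k} ∩ {ω | #(occurrences X M c' ω) = k}) ≤
      (1 - (n : ℝ)⁻¹) ^ (-(2 * k : ℤ)) * μ.real {ω | #(occurrences X M c ω) = k} ^ 2 := by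
  have hn : (2 : ℝ) ≤ n := by
    exact_mod_cast (by simpa using Fintype.one_lt_card_iff.2 ⟨c, c', hcc⟩ : 1 < n)
  have hx : 2 * (n : ℝ)⁻¹ ≤ 1 := by
    rw [← div_eq_mul_inv, div_le_one (by linarith)]; exact hn
  calc _ ≤ M.choose k ^ 2 * ((n : ℝ)⁻¹ ^ (2 * k) * (1 - 2 * (n : ℝ)⁻¹) ^ (M - 2 * k)) := by
        simpa only [div_eq_mul_inv] using hX.measureReal_card_occurrences_inter_le hcc k
    _ ≤ M.choose k ^ 2 * ((n : ℝ)⁻¹ ^ (2 * k) *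
          ((1 - (n : ℝ)⁻¹) ^ (-(2 * k : ℤ)) * ((1 - (n : ℝ)⁻¹) ^ (M - k)) ^ 2)) := by
        gcongr
        exact one_sub_two_mul_pow_le hx hk
    _ = _ := by rw [hX.measureReal_card_occurrences_eq c k]; ring

end IIDUniform

section SumIndicator

variable {Ω ι : Type*} [MeasurableSpace Ω] {μ : Measure Ω} [Fintype ι] {A : ι → Set Ω}

omit [MeasurableSpace Ω] in
lemma sum_indicator_one_sq (A : ι → Set Ω) (ω : Ω) :
    (∑ i, (A i).indicator (1 : Ω → ℝ) ω) ^ 2 = ∑ i, ∑ j, (A i ∩ A j).indicator 1 ω := by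
  simp [sq, sum_mul_sum, Set.inter_indicator_one]

lemma integral_sum_indicator_one [IsFiniteMeasure μ] (hA : ∀ i, MeasurableSet (A i)) :
    ∫ ω, ∑ i, (A i).indicator (1 : Ω → ℝ) ω ∂μ = ∑ i, μ.real (A i) := by
  rw [integral_finsetSum _ fun i _ =>
    ((integrable_const 1).indicator (hA i) : Integrable ((A i).indicator (1 : Ω → ℝ)) μ)]
  exact sum_congr rfl fun i _ => integral_indicator_one (hA i)

lemma variance_sum_indicator_one_le [IsProbabilityMeasure μ] (hA : ∀ i, MeasurableSet (A i))
    {W : ℝ} (hW : ∀ i j, i ≠ j → μ.real (A i ∩ A j) ≤ W) :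
    variance (fun ω => ∑ i, (A i).indicator (1 : Ω → ℝ) ω) μ ≤
      ∑ i, μ.real (A i) + Fintype.card ι * (Fintype.card ι - 1) * W
        - (∑ i, μ.real (A i)) ^ 2 := by
  classical
  have hmem : MemLp (fun ω => ∑ i, (A i).indicator (1 : Ω → ℝ) ω) 2 μ :=
    memLp_finsetSum _ fun i _ => memLp_indicator_const 2 (hA i) 1 (Or.inr (measure_ne_top μ _))
  have hsecond : ∫ ω, (∑ i, (A i).indicator (1 : Ω → ℝ) ω) ^ 2 ∂μ =
      ∑ i, ∑ j, μ.real (A i ∩ A j) := by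
    simp_rw [sum_indicator_one_sq]
    rw [integral_finsetSum _ fun i _ => integrable_finsetSum _ fun j _ =>
      ((integrable_const 1).indicator ((hA i).inter (hA j)) :
        Integrable ((A i ∩ A j).indicator (1 : Ω → ℝ)) μ)]
    exact sum_congr rfl fun i _ => integral_sum_indicator_one fun j => (hA i).inter (hA j)
  have hrow : ∀ i, ∑ j, μ.real (A i ∩ A j) ≤ μ.real (A i) + (Fintype.card ι - 1) * W := by
    intro i
    rw [← add_sum_erase _ _ (mem_univ i), Set.inter_self]
    gcongr
    calc ∑ j ∈ univ.erase i, μ.real (A i ∩ A j) ≤ #(univ.erase i) • W :=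
          sum_le_card_nsmul _ _ _ fun j hj => hW i j (ne_of_mem_erase hj).symm
      _ = (Fintype.card ι - 1) * W := by
          rw [card_erase_of_mem (mem_univ i), card_univ, nsmul_eq_mul,
            Nat.cast_pred (Fintype.card_pos_iff.2 ⟨i⟩)]
  rw [variance_eq_sub hmem, integral_sum_indicator_one hA]
  simp only [Pi.pow_apply]
  rw [hsecond]
  gcongr
  calc ∑ i, ∑ j, μ.real (A i ∩ A j) ≤ ∑ i, (μ.real (A i) + (Fintype.card ι - 1) * W) :=
        sum_le_sum fun i _ => hrow i
    _ = _ := by rw [sum_add_distrib, sum_const, card_univ, nsmul_eq_mul, mul_assoc]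

end SumIndicator

lemma couponCount_eq_sum_indicator {Ω : Type*} {n : ℕ} (X : ℕ → Ω → Fin n) (k M : ℕ) (ω : Ω) :
    (couponCount X k M ω : ℝ) = ∑ c, {ω | #(occurrences X M c ω) = k}.indicator 1 ω := by
  simp [couponCount, occurrences, Set.indicator_apply]

theorem statement17_general
    (n : ℕ) (M k : ℕ) (hk : 2 * k ≤ M)
    (Ω : Type) [MeasurableSpace Ω]
    (μ : Measure Ω) (hprob : IsProbabilityMeasure μ)
    (X : ℕ → Ω → Fin n) (hX : IIDUniform X μ) :
    variance (fun ω => (couponCount X k M ω : ℝ)) μ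
      ≤ (∫ ω, (couponCount X k M ω : ℝ) ∂μ) ^ 2
          * ((1 - 1 / (n : ℝ)) ^ (-(2 * (k : ℤ))) - 1)
        + ∫ ω, (couponCount X k M ω : ℝ) ∂μ := by
  set A : Fin n → Set Ω := fun c => {ω | #(occurrences X M c ω) = k}
  set p : ℝ := M.choose k * ((n : ℝ)⁻¹ ^ k * (1 - (n : ℝ)⁻¹) ^ (M - k))
  set q : ℝ := (1 - 1 / (n : ℝ)) ^ (-(2 * (k : ℤ))) with hq_def
  have hA : ∀ c, MeasurableSet (A c) := fun c => hX.measurableSet_card_occurrences_eq c k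
  have hp : ∀ c, μ.real (A c) = p := fun c => hX.measureReal_card_occurrences_eq c k
  have hS : (fun ω => (couponCount X k M ω : ℝ)) = fun ω => ∑ c, (A c).indicator 1 ω :=
    funext (couponCount_eq_sum_indicator X k M)
  have hvar := variance_sum_indicator_one_le (μ := μ) hA (W := q * p ^ 2) fun c c' hcc => by
    rw [← hp c, hq_def, one_div]
    exact hX.measureReal_card_occurrences_inter_le_sq hcc hk
  have hq : 0 ≤ q := zpow_nonneg (by simpa [one_div] using Nat.cast_inv_le_one n) _
  have hdiag : 0 ≤ n * q * p ^ 2 := by positivity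
  rw [hS, integral_sum_indicator_one hA]
  simp only [hp, sum_const, card_univ, Fintype.card_fin, nsmul_eq_mul] at hvar ⊢
  linear_combination hvar + hdiag

/-- If `M` coupons are drawn i.i.d. uniformly from `n` types and `S_{k,M}`
is the number of types appearing exactly `k` times, then for `0 ≤ 2k ≤ M` with `k < n`,
`Var(S_{k,M}) ≤ E(S_{k,M})² ((1 - 1/n)^(-2k) - 1) + E(S_{k,M})`. -/
theorem statement17
    (n : ℕ) (hn : 0 < n) (M k : ℕ) (hk : 2 * k ≤ M) (hkn : k < n)
    (Ω : Type) [MeasurableSpace Ω]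
    (μ : Measure Ω) (hprob : IsProbabilityMeasure μ)
    (X : ℕ → Ω → Fin n) (hX : IIDUniform X μ) :
    variance (fun ω => (couponCount X k M ω : ℝ)) μ
      ≤ (∫ ω, (couponCount X k M ω : ℝ) ∂μ) ^ 2
          * ((1 - 1 / (n : ℝ)) ^ (-(2 * (k : ℤ))) - 1)
        + ∫ ω, (couponCount X k M ω : ℝ) ∂μ :=
  statement17_general n M k hk Ω μ hprob X hX
end
end

section
/- Fix m ∈ ℕ, an integer k ≥ m, and an integer r ≥ 0. Let T be the number of coupons drawn until every one of the n types appears at least m times, and let S_{k,x} be the number of types appearing exactly k times among the first x coupons. Then for every integer M ≥ 1, P(S_{m−1,M−1} = 1, S_{m−1,M} = 0, S_{k,M−1} = r) = P(S_{m−1,M−1} = 1, S_{k,M−1} = r) / n, and consequently P(T = M, S_{k,M−1} = r) ≤ P(S_{m−1,M−1} = 1, S_{k,M−1} = r) / n. -/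
open MeasureTheory ProbabilityTheory Filter Real Topology

noncomputable section

/-!
Draws are indexed from `0`, so the `M`-th coupon is `X (M - 1)`. The event
`S_{m-1,M-1} = 1, S_{m-1,M} = 0` says that exactly one type `c` has been seen `m - 1` times
before the `M`-th draw and that this draw is of type `c`. Splitting by `c`, each piece is an
event of the count vector after `M - 1` draws intersected with `{X (M - 1) = c}`. The count vector
is a function of the first `M - 1` draws, hence independent of the uniform draw `X (M - 1)`, so
each piece has `1/n` of the probability of its count-vector event; summing over `c` gives
`P(S_{m-1,M-1} = 1, S_{k,M-1} = r) / n`. The inequality holds because `T = M` forces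
`S_{m-1,M-1} = 1` and `S_{m-1,M} = 0`.
-/

namespace CouponCollector

variable {Ω : Type*} {n : ℕ}

def typeCount (X : ℕ → Ω → Fin n) (x : ℕ) (ω : Ω) (c : Fin n) : ℕ :=
  ((Finset.range x).filter fun i => X i ω = c).card

section Combinatorics

variable {X : ℕ → Ω → Fin n} {ω : Ω}

lemma typeCount_succ (X : ℕ → Ω → Fin n) (x : ℕ) (ω : Ω) (c : Fin n) :
    typeCount X (x + 1) ω c = typeCount X x ω c + if X x ω = c then 1 else 0 := by
  unfold typeCount
  rw [Finset.range_add_one, Finset.filter_insert]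
  split_ifs with h
  · exact Finset.card_insert_of_notMem (by simp)
  · rfl

lemma typeCount_succ_of_ne {x : ℕ} {c : Fin n} (h : X x ω ≠ c) :
    typeCount X (x + 1) ω c = typeCount X x ω c := by
  simp [typeCount_succ, h]

lemma typeCount_succ_self (x : ℕ) :
    typeCount X (x + 1) ω (X x ω) = typeCount X x ω (X x ω) + 1 := by
  simp [typeCount_succ]

lemma couponCount_eq_one_iff {j x : ℕ} :
    couponCount X j x ω = 1 ↔ ∃! c, typeCount X x ω c = j := by
  simp only [couponCount, Finset.card_eq_one_iff_existsUnique, Finset.mem_filter,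
    Finset.mem_univ, true_and]
  rfl

lemma couponCount_eq_zero_iff {j x : ℕ} :
    couponCount X j x ω = 0 ↔ ∀ c, typeCount X x ω c ≠ j := by
  simp only [couponCount, Finset.card_eq_zero, Finset.filter_eq_empty_iff, Finset.mem_univ,
    true_implies]
  rfl

lemma couponCount_succ_eq_zero_iff {j x : ℕ} (h : couponCount X j x ω = 1) :
    couponCount X j (x + 1) ω = 0 ↔ typeCount X x ω (X x ω) = j := by
  obtain ⟨c, hc, huniq⟩ := couponCount_eq_one_iff.mp h
  rw [couponCount_eq_zero_iff]
  constructor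
  · intro hzero
    by_contra hne
    have hXc : X x ω ≠ c := fun hXc => hne (hXc ▸ hc)
    exact hzero c (by rw [typeCount_succ_of_ne hXc, hc])
  · intro hX d
    by_cases hd : X x ω = d
    · subst hd
      rw [typeCount_succ_self, hX]
      omega
    · rw [typeCount_succ_of_ne hd]
      intro hdj
      exact hd (huniq _ hX ▸ (huniq d hdj).symm)

lemma collectTime_eq_succ {m x : ℕ} (h : collectTime X m ω = x + 1) :
    couponCount X (m - 1) x ω = 1 ∧ typeCount X x ω (X x ω) = m - 1 := by
  replace h : sInf {t | ∀ c, m ≤ typeCount X t ω c} = x + 1 := h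
  have hne : {t | ∀ c, m ≤ typeCount X t ω c}.Nonempty := by
    by_contra hemp
    rw [Set.not_nonempty_iff_eq_empty.mp hemp, Nat.sInf_empty] at h
    omega
  have hdone : ∀ c, m ≤ typeCount X (x + 1) ω c := h ▸ Nat.sInf_mem hne
  obtain ⟨c, hc⟩ : ∃ c, typeCount X x ω c < m := by
    by_contra! hall
    have := Nat.sInf_le (show x ∈ {t | ∀ c, m ≤ typeCount X t ω c} from hall)
    omega
  have hother : ∀ d, X x ω ≠ d → m ≤ typeCount X x ω d := fun d hd =>
    typeCount_succ_of_ne hd ▸ hdone d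
  have hXc : X x ω = c := by
    by_contra hXc
    exact absurd (hother c hXc) (by omega)
  have hlast : typeCount X x ω (X x ω) = m - 1 := by
    have := hdone (X x ω)
    rw [typeCount_succ_self] at this
    rw [hXc] at this ⊢
    omega
  refine ⟨couponCount_eq_one_iff.mpr ⟨X x ω, hlast, fun d hd => ?_⟩, hlast⟩
  by_contra hdX
  have := hother d (Ne.symm hdX)
  omega

end Combinatorics

section Probability

lemma measure_eq_sum_inter_of_existsUnique [MeasurableSpace Ω] {μ : Measure Ω} {ι : Type*}
    [Fintype ι] {A : Set Ω} {p : ι → Set Ω} (hA : MeasurableSet A)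
    (hp : ∀ i, MeasurableSet (p i)) (h : ∀ ω ∈ A, ∃! i, ω ∈ p i) :
    μ A = ∑ i, μ (A ∩ p i) := by
  have hunion : A = ⋃ i, A ∩ p i := by
    ext ω
    simp only [Set.mem_iUnion, Set.mem_inter_iff, exists_and_left, iff_self_and]
    exact fun hω => (h ω hω).exists
  have hdisj : Pairwise (Function.onFun Disjoint fun i => A ∩ p i) := by
    intro i i' hii'
    refine Set.disjoint_left.mpr fun ω ⟨hω, hi⟩ ⟨_, hi'⟩ => hii' ?_
    exact (h ω hω).unique hi hi'
  conv_lhs => rw [hunion]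
  rw [measure_iUnion hdisj fun i => hA.inter (hp i), tsum_fintype]

lemma typeCount_eq_comp_history (X : ℕ → Ω → Fin n) (x : ℕ) :
    typeCount X x = (fun (h : Finset.range x → Fin n) c =>
      ((Finset.range x).attach.filter fun i => h i = c).card) ∘
      fun ω (i : Finset.range x) => X i ω := by
  ext ω c
  have := congrArg Finset.card (Finset.filter_attach (fun i => X i ω = c) (Finset.range x))
  simpa [typeCount] using this.symm

variable [MeasurableSpace Ω] {μ : Measure Ω} {X : ℕ → Ω → Fin n}

lemma measurable_typeCount (hX : ∀ i, Measurable (X i)) (x : ℕ) :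
    Measurable (typeCount X x) := by
  rw [typeCount_eq_comp_history]
  exact (measurable_of_finite _).comp (measurable_pi_lambda _ fun i => hX i)

lemma indepFun_typeCount_draw (hX : IIDUniform X μ) (x : ℕ) :
    IndepFun (typeCount X x) (X x) μ := by
  have hhist := hX.2.1.indepFun_finset (Finset.range x) {x}
    (Finset.disjoint_singleton_right.mpr (by simp)) hX.1
  rw [typeCount_eq_comp_history]
  exact hhist.comp (measurable_of_finite _)
    (measurable_of_finite fun h : ({x} : Finset ℕ) → Fin n =>
      h ⟨x, Finset.mem_singleton_self x⟩)

lemma measure_typeCount_preimage_inter_draw (hX : IIDUniform X μ) (x : ℕ)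
    (H : Set (Fin n → ℕ)) (c : Fin n) :
    μ (typeCount X x ⁻¹' H ∩ {ω | X x ω = c}) = μ (typeCount X x ⁻¹' H) / n := by
  have hdraw : {ω | X x ω = c} = X x ⁻¹' {c} := rfl
  rw [hdraw, (indepFun_typeCount_draw hX x).measure_inter_preimage_eq_mul H {c}
    (Set.to_countable H).measurableSet (measurableSet_singleton c), ← hdraw, hX.2.2, mul_one_div]

lemma measure_preimage_inter_typeCount_draw_eq (hX : IIDUniform X μ) (x j : ℕ)
    (G : Set (Fin n → ℕ)) (hG : ∀ v ∈ G, ∃! c, v c = j) :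
    μ (typeCount X x ⁻¹' G ∩ {ω | typeCount X x ω (X x ω) = j}) =
      μ (typeCount X x ⁻¹' G) / n := by
  set F := typeCount X x ⁻¹' G
  set E := F ∩ {ω | typeCount X x ω (X x ω) = j}
  let p (c : Fin n) := typeCount X x ⁻¹' {v | v c = j}
  have hcounts := measurable_typeCount hX.1 x
  have hF : MeasurableSet F := hcounts (Set.to_countable G).measurableSet
  have hp (c : Fin n) : MeasurableSet (p c) := hcounts (Set.to_countable _).measurableSet
  have hunique : ∀ ω ∈ F, ∃! c, ω ∈ p c := fun ω hω => hG _ hω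
  have hE : MeasurableSet E := (hcounts.prodMk (hX.1 x))
    (Set.to_countable {q : (Fin n → ℕ) × Fin n | q.1 ∈ G ∧ q.1 q.2 = j}).measurableSet
  have hEp (c : Fin n) :
      E ∩ p c = typeCount X x ⁻¹' (G ∩ {v | v c = j}) ∩ {ω | X x ω = c} := by
    ext ω
    constructor
    · rintro ⟨⟨hω, hlast⟩, hc⟩
      exact ⟨⟨hω, hc⟩, (hunique ω hω).unique hlast hc⟩
    · rintro ⟨⟨hω, hc⟩, hXc⟩
      have hXc : X x ω = c := hXc
      exact ⟨⟨hω, show typeCount X x ω (X x ω) = j from hXc ▸ hc⟩, hc⟩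
  calc μ E = ∑ c, μ (E ∩ p c) :=
        measure_eq_sum_inter_of_existsUnique hE hp fun ω hω => hunique ω hω.1
    _ = ∑ c, μ (F ∩ p c) / n := by
        refine Finset.sum_congr rfl fun c _ => ?_
        rw [hEp, measure_typeCount_preimage_inter_draw hX x _ c, Set.preimage_inter]
    _ = μ F / n := by
        simp only [div_eq_mul_inv, ← Finset.sum_mul,
          ← measure_eq_sum_inter_of_existsUnique hF hp hunique]

end Probability

end CouponCollector

open CouponCollector in
theorem statement19_general
    (m : ℕ) (k : ℕ) (r : ℕ)
    (n : ℕ)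
    (Ω : Type) [MeasurableSpace Ω]
    (μ : Measure Ω)
    (X : ℕ → Ω → Fin n) (hX : IIDUniform X μ)
    (M : ℕ) (hM : 1 ≤ M) :
    μ {ω | couponCount X (m - 1) (M - 1) ω = 1
          ∧ couponCount X (m - 1) M ω = 0
          ∧ couponCount X k (M - 1) ω = r}
      = μ {ω | couponCount X (m - 1) (M - 1) ω = 1 ∧ couponCount X k (M - 1) ω = r} / n
    ∧
    μ {ω | collectTime X m ω = M ∧ couponCount X k (M - 1) ω = r}
      ≤ μ {ω | couponCount X (m - 1) (M - 1) ω = 1 ∧ couponCount X k (M - 1) ω = r} / n := by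
  obtain ⟨N, rfl⟩ : ∃ N, M = N + 1 := ⟨M - 1, by omega⟩
  simp only [Nat.add_sub_cancel]
  let G : Set (Fin n → ℕ) := {v | (Finset.univ.filter fun c => v c = m - 1).card = 1 ∧
    (Finset.univ.filter fun c => v c = k).card = r}
  have hG : ∀ v ∈ G, ∃! c, v c = m - 1 := fun v hv => by
    simpa using Finset.card_eq_one_iff_existsUnique.mp hv.1
  have hE : {ω | couponCount X (m - 1) N ω = 1 ∧ couponCount X (m - 1) (N + 1) ω = 0
      ∧ couponCount X k N ω = r} =
      typeCount X N ⁻¹' G ∩ {ω | typeCount X N ω (X N ω) = m - 1} := Set.ext fun ω =>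
    ⟨fun ⟨h1, h0, hr⟩ => ⟨⟨h1, hr⟩, (couponCount_succ_eq_zero_iff h1).mp h0⟩,
      fun ⟨⟨h1, hr⟩, hlast⟩ => ⟨h1, (couponCount_succ_eq_zero_iff h1).mpr hlast, hr⟩⟩
  have hfirst := hE ▸ measure_preimage_inter_typeCount_draw_eq hX N (m - 1) G hG
  refine ⟨hfirst, hfirst ▸ measure_mono fun ω ⟨hT, hr⟩ => ?_⟩
  obtain ⟨h1, hlast⟩ := collectTime_eq_succ hT
  exact ⟨h1, (couponCount_succ_eq_zero_iff h1).mpr hlast, hr⟩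

/-- Fix `m ≥ 1`, `k ≥ m` and `r ≥ 0`. Let `T` be the number of draws until
each of the `n` types appears at least `m` times and `S_{k,x}` the number of types appearing
exactly `k` times among the first `x` draws. Then for every `M ≥ 1`,
`P(S_{m-1,M-1} = 1, S_{m-1,M} = 0, S_{k,M-1} = r) = P(S_{m-1,M-1} = 1, S_{k,M-1} = r)/n`,
and consequently `P(T = M, S_{k,M-1} = r) ≤ P(S_{m-1,M-1} = 1, S_{k,M-1} = r)/n`. -/
theorem statement19
    (m : ℕ) (hm : 1 ≤ m) (k : ℕ) (hk : m ≤ k) (r : ℕ)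
    (n : ℕ) (hn : 0 < n)
    (Ω : Type) [MeasurableSpace Ω]
    (μ : Measure Ω) (hprob : IsProbabilityMeasure μ)
    (X : ℕ → Ω → Fin n) (hX : IIDUniform X μ)
    (M : ℕ) (hM : 1 ≤ M) :
    μ {ω | couponCount X (m - 1) (M - 1) ω = 1
          ∧ couponCount X (m - 1) M ω = 0
          ∧ couponCount X k (M - 1) ω = r}
      = μ {ω | couponCount X (m - 1) (M - 1) ω = 1 ∧ couponCount X k (M - 1) ω = r} / n
    ∧
    μ {ω | collectTime X m ω = M ∧ couponCount X k (M - 1) ω = r}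
      ≤ μ {ω | couponCount X (m - 1) (M - 1) ω = 1 ∧ couponCount X k (M - 1) ω = r} / n :=
  statement19_general m k r n Ω μ X hX M hM
end
end
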